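/- Let C be the (random) final set of centers produced by the fully online k-means algorithm on input v_1,…,v_n, let γ = (max_{u≠v} ‖u−v‖)/(min_{u≠v} ‖u−v‖) be the aspect ratio of the input (maxima and minima over distinct input points), and assume the input contains at least k+1 distinct vectors and n ≥ 2. Then there is a universal constant c₀ (independent of n, k, d, and the input vectors) such that E[|C|] ≤ c₀ · k · (1 + log₂ n) · (1 + log₂(γ n)). -/

import Mathlib

open scoped ENNReal

/-- Points of `ℝ^d`. -/
abbrev Pt (d : ℕ) := EuclideanSpace ℝ (Fin d)

/-- `D²(v, C)`: squared Euclidean distance from `v` to the nearest center in the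
list `C`. -/
noncomputable def D2 {d : ℕ} (v : Pt d) (C : List (Pt d)) : ℝ :=
  sInf {x | ∃ c ∈ C, x = ‖v - c‖ ^ 2}

/-- `min_{c ≠ c' ∈ C} ‖c - c'‖²` over a list `C` of points. -/
noncomputable def minPairSqDist {d : ℕ} (C : List (Pt d)) : ℝ :=
  sInf {x | ∃ c ∈ C, ∃ c' ∈ C, c ≠ c' ∧ x = ‖c - c'‖ ^ 2}

/-- State of the fully online `k`-means algorithm: current centers `C`, per-phase
counter `q`, current facility cost `f`, accumulated online service cost `cost`, and
running count `m` (which equals `k+1` once the first `k+1` distinct input vectors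
have been collected, and is incremented for every subsequent point). -/
structure OnState (d : ℕ) where
  C : List (Pt d)
  q : ℕ
  f : ℝ
  cost : ℝ
  m : ℕ

/-- Probability of opening a new cluster at `v`: `min(D²(v,C)/f, 1)`. -/
noncomputable def openProb {d : ℕ} (v : Pt d) (C : List (Pt d)) (f : ℝ) : ℝ≥0∞ :=
  match C with
  | [] => 1
  | _ :: _ => ENNReal.ofReal (min (D2 v C / f) 1)

lemma openProb_le_one {d : ℕ} (v : Pt d) (C : List (Pt d)) (f : ℝ) :
    openProb v C f ≤ 1 := by
  cases C with
  | nil => exact le_rfl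
  | cons a l => exact ENNReal.ofReal_le_one.mpr (min_le_right _ _)

/-- One step of the fully online `k`-means algorithm on point `v`. While fewer than
`k+1` distinct vectors have been seen (the initialization), every new distinct vector
becomes a center (and is its own center, at zero cost); when the `(k+1)`-st distinct
vector arrives, the facility cost is initialized to `w*/k` with
`w* = (1/2)·min_{c≠c'∈C} ‖c-c'‖²`. Afterwards, the running count `m` is incremented
and, with probability `min(D²(v,C)/f, 1)`, the point `v` is added as a new center and
the counter `q` incremented (starting a new phase, resetting `q` and doubling `f`,
once `q` reaches `3k(1+log₂ m)`); otherwise `v` is served by its nearest current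
center at cost `D²(v,C)`. -/
noncomputable def onStep {d : ℕ} (k : ℕ) (v : Pt d) (s : OnState d) :
    PMF (OnState d) :=
  letI : DecidableEq (Pt d) := Classical.decEq _
  if s.C.length < k + 1 then
    PMF.pure <|
      if v ∈ s.C then s
      else if s.C.length + 1 = k + 1 then
        { C := s.C ++ [v], q := 0, f := (minPairSqDist (s.C ++ [v]) / 2) / (k : ℝ),
          cost := s.cost, m := s.m + 1 }
      else
        { C := s.C ++ [v], q := 0, f := 0, cost := s.cost, m := s.m + 1 }
  else
    (PMF.bernoulli (openProb v s.C s.f).toNNReal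
      (by simpa using ENNReal.toNNReal_mono ENNReal.one_ne_top (openProb_le_one v s.C s.f))).bind fun b =>
      PMF.pure <|
        if b then
          if 3 * (k : ℝ) * (1 + Real.logb 2 ((s.m : ℝ) + 1)) ≤ (s.q : ℝ) + 1 then
            { C := s.C ++ [v], q := 0, f := 2 * s.f, cost := s.cost, m := s.m + 1 }
          else
            { C := s.C ++ [v], q := s.q + 1, f := s.f, cost := s.cost, m := s.m + 1 }
        else
          { s with cost := s.cost + D2 v s.C, m := s.m + 1 }

/-- The distribution over final states of the fully online `k`-means algorithm on the
stream `vs`. -/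
noncomputable def onRun {d : ℕ} (k : ℕ) (vs : List (Pt d)) : PMF (OnState d) :=
  vs.foldlM (fun s v => onStep k v s) { C := [], q := 0, f := 0, cost := 0, m := 0 }

/-- Expected number of centers of a (random) final state. -/
noncomputable def expectedCenters {d : ℕ} (μ : PMF (OnState d)) : ℝ≥0∞ :=
  ∑' s, μ s * (s.C.length : ℝ≥0∞)

/-- The aspect ratio `γ` of the input: the maximum distance between two distinct
input points divided by the minimum distance between two distinct input points. -/
noncomputable def aspectRatio {d n : ℕ} (v : Fin n → Pt d) : ℝ :=
  sSup {x | ∃ i j, v i ≠ v j ∧ x = ‖v i - v j‖} /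
    sInf {x | ∃ i j, v i ≠ v j ∧ x = ‖v i - v j‖}


/-!
After the initialization, use the potential
`Φ = |C| + max 0 ((T + 1) · (1 + log₂ (n W² / f)) - q)`, where `T = 3k(1 + log₂ n)` bounds the
per-phase counter `q`, and `w`, `W` are the smallest and largest distance between distinct input
points. As long as the slack `(T + 1)(1 + log₂ (n W² / f)) - q` is at least one, opening a center
costs one unit of slack (either `q` grows, or `f` doubles, which removes `T + 1 ≥ q + 1` units,
and `q` restarts at `0`), so `Φ` does not grow. Once the slack is below one, `f > n W²`, so a
center is opened with probability at most `D²/f ≤ 1/n`. Hence `Φ` grows by at most `1/n` in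
expectation per point, and `E|C| ≤ E Φ ≤ Φ₀ + 1`, where `Φ₀` uses the lower bound `w²/(2k)` for
the first facility cost; `Φ₀ = O(k log n · log (γ n))`.
-/

lemma ENNReal.one_sub_mul_add_mul_le {p a b c δ : ℝ≥0∞} (hp : p ≤ 1) (ha : a ≤ c)
    (hb : b ≤ c + δ) : (1 - p) * a + p * b ≤ c + p * δ :=
  calc (1 - p) * a + p * b ≤ (1 - p) * c + p * (c + δ) := by gcongr
    _ = c + p * δ := by rw [mul_add, ← add_assoc, ← add_mul, tsub_add_cancel_of_le hp, one_mul]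

lemma Real.logb_two_natCast_nonneg (m : ℕ) : 0 ≤ Real.logb 2 m :=
  div_nonneg (Real.log_natCast_nonneg m) (Real.log_nonneg one_le_two)

lemma Real.logb_two_natCast_mono : Monotone fun m : ℕ => Real.logb 2 m := by
  intro a b hab
  rcases Nat.eq_zero_or_pos a with rfl | ha
  · simpa using Real.logb_two_natCast_nonneg b
  · exact Real.logb_le_logb_of_le one_lt_two (by exact_mod_cast ha) (by exact_mod_cast hab)

namespace PMF

variable {α β : Type*}

noncomputable def expect (μ : PMF α) (g : α → ℝ≥0∞) : ℝ≥0∞ := ∑' a, μ a * g a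

@[simp]
lemma expect_pure (a : α) (g : α → ℝ≥0∞) : (PMF.pure a).expect g = g a := by
  simp [expect, PMF.pure_apply]

lemma expect_bind (μ : PMF α) (f : α → PMF β) (g : β → ℝ≥0∞) :
    (μ.bind f).expect g = ∑' a, μ a * (f a).expect g := by
  simp only [expect, PMF.bind_apply, ← ENNReal.tsum_mul_right, ← ENNReal.tsum_mul_left]
  rw [ENNReal.tsum_comm]
  exact tsum_congr fun a => tsum_congr fun b => mul_assoc _ _ _

lemma expect_add_const (μ : PMF α) (g : α → ℝ≥0∞) (c : ℝ≥0∞) :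
    μ.expect (fun a => g a + c) = μ.expect g + c := by
  simp only [expect, mul_add]
  rw [ENNReal.tsum_add, ENNReal.tsum_mul_right, PMF.tsum_coe, one_mul]

lemma expect_mono {μ : PMF α} {g g' : α → ℝ≥0∞} (h : ∀ a ∈ μ.support, g a ≤ g' a) :
    μ.expect g ≤ μ.expect g' := by
  refine ENNReal.tsum_le_tsum fun a => ?_
  by_cases ha : μ a = 0
  · simp [ha]
  · exact mul_le_mul_right (h a ha) _

lemma expect_le_of_forall_le {μ : PMF α} {g : α → ℝ≥0∞} {c : ℝ≥0∞}
    (h : ∀ a ∈ μ.support, g a ≤ c) : μ.expect g ≤ c :=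
  (expect_mono h).trans_eq <| by simp [expect, ENNReal.tsum_mul_right]

set_option linter.deprecated false in
lemma expect_bernoulli_bind {p : NNReal} (hp : p ≤ 1) (f : Bool → PMF β) (g : β → ℝ≥0∞) :
    ((PMF.bernoulli p hp).bind f).expect g =
      (1 - (p : ℝ≥0∞)) * (f false).expect g + p * (f true).expect g := by
  rw [expect_bind, tsum_bool, PMF.bernoulli_apply, PMF.bernoulli_apply]
  simp [ENNReal.coe_sub]

theorem expect_foldlM_le (step : α → β → PMF α) (Φ : α → ℝ≥0∞) (ε : ℝ≥0∞)
    (P : ℕ → α → Prop) (S : Set β)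
    (hP : ∀ r a x, x ∈ S → P (r + 1) a → ∀ a' ∈ (step a x).support, P r a')
    (hΦ : ∀ r a x, x ∈ S → P (r + 1) a → (step a x).expect Φ ≤ Φ a + ε) :
    ∀ (l : List β) (a : α), (∀ x ∈ l, x ∈ S) → P l.length a →
      (l.foldlM step a).expect Φ ≤ Φ a + l.length * ε := by
  intro l
  induction l with
  | nil => intro a _ _; exact (expect_pure a Φ).trans_le (by simp)
  | cons x l ih =>
    intro a hl ha
    have hx : x ∈ S := hl x List.mem_cons_self
    calc ((x :: l).foldlM step a).expect Φ
        = ∑' a', step a x a' * (l.foldlM step a').expect Φ := expect_bind _ _ _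
      _ ≤ ∑' a', step a x a' * (Φ a' + l.length * ε) :=
          ENNReal.tsum_le_tsum fun a' => by
            by_cases h : step a x a' = 0
            · simp [h]
            · exact mul_le_mul_right
                (ih a' (fun y hy => hl y (List.mem_cons_of_mem _ hy)) (hP _ a x hx ha a' h)) _
      _ = (step a x).expect Φ + l.length * ε := expect_add_const _ _ _
      _ ≤ Φ a + (x :: l).length * ε := by
          grw [hΦ _ a x hx ha]
          simp only [List.length_cons, Nat.cast_succ, add_mul, one_mul]
          rw [add_assoc, add_comm ε]

end PMF

section Geometry

variable {d : ℕ}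

lemma D2_nonneg (v : Pt d) (C : List (Pt d)) : 0 ≤ D2 v C :=
  Real.sInf_nonneg (by rintro x ⟨c, _, rfl⟩; positivity)

lemma D2_le (v : Pt d) {C : List (Pt d)} {c : Pt d} (hc : c ∈ C) : D2 v C ≤ ‖v - c‖ ^ 2 :=
  csInf_le ⟨0, by rintro x ⟨c', _, rfl⟩; positivity⟩ ⟨c, hc, rfl⟩

lemma sq_le_minPairSqDist {C : List (Pt d)} {w : ℝ} (hw : 0 ≤ w)
    (hne : ∃ c ∈ C, ∃ c' ∈ C, c ≠ c') (hsep : ∀ c ∈ C, ∀ c' ∈ C, c ≠ c' → w ≤ ‖c - c'‖) :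
    w ^ 2 ≤ minPairSqDist C := by
  obtain ⟨c, hc, c', hc', hcc⟩ := hne
  refine le_csInf ⟨_, c, hc, c', hc', hcc, rfl⟩ ?_
  rintro x ⟨a, ha, a', ha', haa, rfl⟩
  gcongr
  exact hsep a ha a' ha' haa

lemma sq_le_minPairSqDist_append {V : Set (Pt d)} {w : ℝ} (hw : 0 ≤ w)
    (hsep : ∀ x ∈ V, ∀ y ∈ V, x ≠ y → w ≤ ‖x - y‖) {C : List (Pt d)} {v : Pt d}
    (hC : ∀ c ∈ C, c ∈ V) (hv : v ∈ V) (hne : C ≠ []) (hvC : v ∉ C) :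
    w ^ 2 ≤ minPairSqDist (C ++ [v]) := by
  have hCv : ∀ c ∈ C ++ [v], c ∈ V := by simpa [or_imp, forall_and] using ⟨hC, hv⟩
  obtain ⟨c, hc⟩ := List.exists_mem_of_ne_nil C hne
  refine sq_le_minPairSqDist hw ⟨c, by simp [hc], v, by simp, ?_⟩
    fun x hx y hy hxy => hsep x (hCv x hx) y (hCv y hy) hxy
  rintro rfl
  exact hvC hc

lemma openProb_le_ofReal_div (v : Pt d) {C : List (Pt d)} (hC : C ≠ []) (f : ℝ) :
    openProb v C f ≤ ENNReal.ofReal (D2 v C / f) := by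
  cases C with
  | nil => exact absurd rfl hC
  | cons a l => exact ENNReal.ofReal_le_ofReal (min_le_left _ _)

end Geometry

namespace OnState

variable {d k : ℕ} {V : Set (Pt d)} {v : Pt d} {s : OnState d}

noncomputable def serve (v : Pt d) (s : OnState d) : OnState d :=
  { s with cost := s.cost + D2 v s.C, m := s.m + 1 }

noncomputable def addCenter (k : ℕ) (v : Pt d) (s : OnState d) : OnState d :=
  if 3 * (k : ℝ) * (1 + Real.logb 2 ((s.m : ℝ) + 1)) ≤ (s.q : ℝ) + 1 then
    { C := s.C ++ [v], q := 0, f := 2 * s.f, cost := s.cost, m := s.m + 1 }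
  else
    { C := s.C ++ [v], q := s.q + 1, f := s.f, cost := s.cost, m := s.m + 1 }

lemma mem_support_onStep_of_le_length (h : k + 1 ≤ s.C.length) {s' : OnState d}
    (hs' : s' ∈ (onStep k v s).support) : s' = s.serve v ∨ s' = s.addCenter k v := by
  rw [onStep, if_neg h.not_gt, PMF.mem_support_bind_iff] at hs'
  obtain ⟨b, -, hb⟩ := hs'
  rw [PMF.mem_support_pure_iff] at hb
  cases b
  exacts [Or.inl hb, Or.inr hb]

lemma expect_onStep_of_le_length (h : k + 1 ≤ s.C.length) (g : OnState d → ℝ≥0∞) :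
    (onStep k v s).expect g =
      (1 - openProb v s.C s.f) * g (s.serve v) + openProb v s.C s.f * g (s.addCenter k v) := by
  rw [onStep, if_neg h.not_gt]
  refine (PMF.expect_bernoulli_bind _ _ _).trans ?_
  rw [ENNReal.coe_toNNReal (ne_top_of_le_ne_top ENNReal.one_ne_top (openProb_le_one _ _ _)),
    PMF.expect_pure, PMF.expect_pure, if_neg Bool.false_ne_true, if_pos rfl]
  rfl

lemma m_le_of_mem_support_onStep {s' : OnState d} (hs' : s' ∈ (onStep k v s).support) :
    s'.m ≤ s.m + 1 := by
  by_cases h : s.C.length < k + 1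
  · rw [onStep, if_pos h, PMF.support_pure, Set.mem_singleton_iff] at hs'
    subst hs'
    split_ifs <;> simp
  · rcases mem_support_onStep_of_le_length (not_lt.1 h) hs' with rfl | rfl
    · exact le_rfl
    · unfold addCenter; split_ifs <;> exact le_rfl

def WellFormed (k : ℕ) (V : Set (Pt d)) (s : OnState d) : Prop :=
  (∀ c ∈ s.C, c ∈ V) ∧
    (k + 1 ≤ s.C.length → 0 < s.f ∧ (s.q : ℝ) ≤ 3 * k * (1 + Real.logb 2 s.m))

lemma WellFormed.serve (hs : s.WellFormed k V) : (s.serve v).WellFormed k V := by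
  refine ⟨hs.1, fun h => ?_⟩
  obtain ⟨hf, hq⟩ := hs.2 h
  have hm : Real.logb 2 s.m ≤ Real.logb 2 (s.serve v).m :=
    Real.logb_two_natCast_mono (Nat.le_succ s.m)
  exact ⟨hf, hq.trans (mul_le_mul_of_nonneg_left (by linarith) (by positivity))⟩

lemma WellFormed.addCenter (hv : v ∈ V) (h : k + 1 ≤ s.C.length) (hs : s.WellFormed k V) :
    (s.addCenter k v).WellFormed k V := by
  have hC : ∀ c ∈ s.C ++ [v], c ∈ V := by simpa [or_imp, forall_and] using ⟨hs.1, hv⟩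
  obtain ⟨hf, -⟩ := hs.2 h
  unfold OnState.addCenter
  split_ifs with hphase
  · refine ⟨hC, fun _ => ⟨by positivity, ?_⟩⟩
    have := Real.logb_two_natCast_nonneg (s.m + 1)
    simp only [CharP.cast_eq_zero]
    positivity
  · refine ⟨hC, fun _ => ⟨hf, ?_⟩⟩
    push_cast
    linarith

lemma WellFormed.onStep_of_length_lt {w : ℝ} (hk : 1 ≤ k) (hw : 0 < w)
    (hsep : ∀ x ∈ V, ∀ y ∈ V, x ≠ y → w ≤ ‖x - y‖) (hv : v ∈ V) (h : s.C.length < k + 1)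
    (hs : s.WellFormed k V) : ∀ s' ∈ (onStep k v s).support, s'.WellFormed k V := by
  have hC : ∀ c ∈ s.C ++ [v], c ∈ V := by simpa [or_imp, forall_and] using ⟨hs.1, hv⟩
  intro s' hs'
  rw [onStep, if_pos h, PMF.support_pure, Set.mem_singleton_iff] at hs'
  subst hs'
  split_ifs with hvC hfull
  · exact hs
  · refine ⟨hC, fun _ => ⟨?_, ?_⟩⟩
    · have hne : s.C ≠ [] := by rintro hnil; simp [hnil] at hfull; omega
      have hmin := sq_le_minPairSqDist_append hw.le hsep hs.1 hv hne hvC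
      exact div_pos (half_pos ((pow_pos hw 2).trans_le hmin)) (by exact_mod_cast hk)
    · have := Real.logb_two_natCast_nonneg (s.m + 1)
      simp only [CharP.cast_eq_zero]
      positivity
  · refine ⟨hC, fun h' => absurd h' ?_⟩
    simp only [List.length_append, List.length_singleton]
    omega

lemma WellFormed.onStep {w : ℝ} (hk : 1 ≤ k) (hw : 0 < w)
    (hsep : ∀ x ∈ V, ∀ y ∈ V, x ≠ y → w ≤ ‖x - y‖) (hv : v ∈ V) (hs : s.WellFormed k V) :
    ∀ s' ∈ (onStep k v s).support, s'.WellFormed k V := by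
  by_cases h : s.C.length < k + 1
  · exact hs.onStep_of_length_lt hk hw hsep hv h
  · intro s' hs'
    rcases mem_support_onStep_of_le_length (not_lt.1 h) hs' with rfl | rfl
    exacts [hs.serve, hs.addCenter hv (not_lt.1 h)]

variable {T F f₀ : ℝ}

/-- `(T + 1)(1 + log₂ (F / f))` bounds the number of centers the current and all later phases can
open before the facility cost exceeds `F`, since each phase opens at most `T + 1` of them. -/
noncomputable def slack (T F : ℝ) (s : OnState d) : ℝ :=
  (T + 1) * (1 + Real.logb 2 (F / s.f)) - s.q

noncomputable def initPotential (k : ℕ) (T F f₀ : ℝ) : ℝ :=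
  k + 1 + max 0 ((T + 1) * (1 + Real.logb 2 (F / f₀)))

noncomputable def potential (k : ℕ) (T F f₀ : ℝ) (s : OnState d) : ℝ :=
  if s.C.length < k + 1 then initPotential k T F f₀ else s.C.length + max 0 (s.slack T F)

lemma initPotential_nonneg : 0 ≤ initPotential k T F f₀ := by
  unfold initPotential
  positivity

lemma potential_nonneg : 0 ≤ s.potential k T F f₀ := by
  unfold potential
  split_ifs
  exacts [initPotential_nonneg, by positivity]

lemma length_le_potential : (s.C.length : ℝ) ≤ s.potential k T F f₀ := by
  unfold potential initPotential
  split_ifs with h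
  · have : (s.C.length : ℝ) ≤ k + 1 := by exact_mod_cast h.le
    linarith [le_max_left 0 ((T + 1) * (1 + Real.logb 2 (F / f₀)))]
  · linarith [le_max_left 0 (s.slack T F)]

lemma potential_serve : (s.serve v).potential k T F f₀ = s.potential k T F f₀ := rfl

lemma slack_addCenter_le (hq : (s.q : ℝ) ≤ T) (hf : 0 < s.f) (hF : 0 < F) :
    (s.addCenter k v).slack T F ≤ s.slack T F - 1 := by
  unfold addCenter slack
  split_ifs
  · have hhalf : Real.logb 2 (F / (2 * s.f)) = Real.logb 2 (F / s.f) - 1 := by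
      rw [mul_comm, ← div_div, Real.logb_div (by positivity) two_ne_zero,
        Real.logb_self_eq_one one_lt_two]
    simp only [hhalf, Nat.cast_zero]
    linarith
  · push_cast
    linarith

lemma potential_addCenter_le (h : k + 1 ≤ s.C.length) (hq : (s.q : ℝ) ≤ T) (hf : 0 < s.f)
    (hF : 0 < F) :
    (s.addCenter k v).potential k T F f₀ ≤ s.C.length + 1 + max 0 (s.slack T F - 1) := by
  have hC : (s.addCenter k v).C = s.C ++ [v] := by unfold addCenter; split_ifs <;> rfl
  have hlen : ¬ (s.addCenter k v).C.length < k + 1 := by simp only [hC]; simp; omega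
  rw [potential, if_neg hlen, hC, List.length_append, List.length_singleton, Nat.cast_succ]
  gcongr
  exact slack_addCenter_le hq hf hF

lemma lt_f_of_slack_lt_one (hq : (s.q : ℝ) ≤ T) (hf : 0 < s.f) (hs : s.slack T F < 1) :
    F < s.f := by
  by_contra! hfF
  have : 0 ≤ Real.logb 2 (F / s.f) := Real.logb_nonneg one_lt_two ((one_le_div hf).2 hfF)
  have hT : 0 ≤ T := (Nat.cast_nonneg s.q).trans hq
  unfold slack at hs
  nlinarith

lemma expect_potential_onStep_le_of_le_length (h : k + 1 ≤ s.C.length)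
    (hq : (s.q : ℝ) ≤ T) (hf : 0 < s.f) (hF : 0 < F) {δ : ℝ} (hD : D2 v s.C ≤ δ) :
    (onStep k v s).expect (fun t => ENNReal.ofReal (t.potential k T F f₀)) ≤
      ENNReal.ofReal (s.potential k T F f₀) + ENNReal.ofReal (δ / F) := by
  rw [expect_onStep_of_le_length h, potential_serve]
  have hΦ : s.potential k T F f₀ = s.C.length + max 0 (s.slack T F) := if_neg h.not_gt
  have hadd := potential_addCenter_le (v := v) (f₀ := f₀) h hq hf hF
  have hp := openProb_le_one v s.C s.f
  by_cases hslack : 1 ≤ s.slack T F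
  · have hle : (s.addCenter k v).potential k T F f₀ ≤ s.potential k T F f₀ := by
      rw [hΦ, max_eq_right (by linarith : (0 : ℝ) ≤ s.slack T F - 1),
        max_eq_right (by linarith : (0 : ℝ) ≤ s.slack T F)] at *
      linarith
    calc _ ≤ ENNReal.ofReal (s.potential k T F f₀) + openProb v s.C s.f * 0 :=
          ENNReal.one_sub_mul_add_mul_le hp le_rfl (by simpa using ENNReal.ofReal_le_ofReal hle)
      _ ≤ _ := by simp
  · have hfF := lt_f_of_slack_lt_one hq hf (not_le.1 hslack)
    have hne : s.C ≠ [] := List.ne_nil_of_length_pos (by omega)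
    have hpε : openProb v s.C s.f ≤ ENNReal.ofReal (δ / F) :=
      (openProb_le_ofReal_div v hne s.f).trans <| ENNReal.ofReal_le_ofReal <|
        div_le_div₀ ((D2_nonneg v s.C).trans hD) hD hF hfF.le
    have hle : (s.addCenter k v).potential k T F f₀ ≤ s.potential k T F f₀ + 1 := by
      rw [hΦ]
      linarith [max_le_max (le_refl (0 : ℝ)) (by linarith : s.slack T F - 1 ≤ s.slack T F)]
    calc _ ≤ ENNReal.ofReal (s.potential k T F f₀) + openProb v s.C s.f * 1 := by
          refine ENNReal.one_sub_mul_add_mul_le hp le_rfl ?_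
          rw [← ENNReal.ofReal_one, ← ENNReal.ofReal_add potential_nonneg zero_le_one]
          exact ENNReal.ofReal_le_ofReal hle
      _ ≤ _ := by rw [mul_one]; gcongr

lemma potential_le_of_mem_support_onStep_of_length_lt {w : ℝ} (hk : 1 ≤ k) (hw : 0 ≤ w)
    (hsep : ∀ x ∈ V, ∀ y ∈ V, x ≠ y → w ≤ ‖x - y‖) (hv : v ∈ V) (hC : ∀ c ∈ s.C, c ∈ V)
    (h : s.C.length < k + 1) (hT : 0 ≤ T) (hF : 0 < F) (hf₀ : 0 < f₀)
    (hf₀w : f₀ ≤ w ^ 2 / 2 / k) :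
    ∀ s' ∈ (onStep k v s).support, s'.potential k T F f₀ ≤ s.potential k T F f₀ := by
  intro s' hs'
  rw [onStep, if_pos h, PMF.support_pure, Set.mem_singleton_iff] at hs'
  subst hs'
  have hΦ : s.potential k T F f₀ = initPotential k T F f₀ := if_pos h
  split_ifs with hvC hfull
  · exact le_rfl
  · have hne : s.C ≠ [] := by rintro hnil; simp [hnil] at hfull; omega
    have hmin := sq_le_minPairSqDist_append hw hsep hC hv hne hvC
    have hf₁ : f₀ ≤ minPairSqDist (s.C ++ [v]) / 2 / k := hf₀w.trans (by gcongr)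
    rw [potential, if_neg (by simp; omega), hΦ, initPotential]
    simp only [slack, List.length_append, List.length_singleton, hfull, Nat.cast_zero, sub_zero]
    push_cast
    gcongr
    · exact one_lt_two
    · exact div_pos hF (hf₀.trans_le hf₁)
  · rw [potential, if_pos (by simp; omega), hΦ]

/-- The potential with `T = 3k(1 + log₂ n)`, which bounds `q` while at most `n` points have been
read; `F = n W²`, beyond which a center is opened with probability at most `1/n`; and
`f₀ = w²/(2k)`, a lower bound for the first facility cost `w*/k`. -/
noncomputable def runPotential (k n : ℕ) (w W : ℝ) (s : OnState d) : ℝ≥0∞ :=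
  ENNReal.ofReal (s.potential k (3 * k * (1 + Real.logb 2 n)) (n * W ^ 2) (w ^ 2 / 2 / k))

lemma expect_runPotential_onStep_le {n : ℕ} {w W : ℝ} (hk : 1 ≤ k) (hw : 0 < w) (hW : 0 < W)
    (hsep : ∀ x ∈ V, ∀ y ∈ V, x ≠ y → w ≤ ‖x - y‖) (hdiam : ∀ x ∈ V, ∀ y ∈ V, ‖x - y‖ ≤ W)
    (hn : 0 < n) (hv : v ∈ V) (hs : s.WellFormed k V) (hm : s.m ≤ n) :
    (onStep k v s).expect (runPotential k n w W) ≤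
      s.runPotential k n w W + ENNReal.ofReal (1 / n) := by
  have hT : 0 ≤ 3 * (k : ℝ) * (1 + Real.logb 2 n) := by
    have := Real.logb_two_natCast_nonneg n
    positivity
  by_cases h : s.C.length < k + 1
  · refine PMF.expect_le_of_forall_le (fun s' hs' => le_add_right (ENNReal.ofReal_le_ofReal ?_))
    exact potential_le_of_mem_support_onStep_of_length_lt hk hw.le hsep hv hs.1 h hT
      (by positivity) (by positivity) le_rfl s' hs'
  · obtain ⟨hf, hq⟩ := hs.2 (not_lt.1 h)
    have hqT : (s.q : ℝ) ≤ 3 * k * (1 + Real.logb 2 n) :=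
      hq.trans (by have := Real.logb_two_natCast_mono hm; gcongr)
    obtain ⟨c, hc⟩ := List.exists_mem_of_ne_nil s.C (List.ne_nil_of_length_pos (by omega))
    have hD : D2 v s.C ≤ W ^ 2 :=
      (D2_le v hc).trans (by gcongr; exact hdiam v hv c (hs.1 c hc))
    have hstep := expect_potential_onStep_le_of_le_length (F := n * W ^ 2) (f₀ := w ^ 2 / 2 / k)
      (not_lt.1 h) hqT hf (by positivity) hD
    refine hstep.trans_eq ?_
    congr 2
    field_simp

end OnState

theorem expectedCenters_onRun_le {d k n : ℕ} {V : Set (Pt d)} {w W : ℝ} (hk : 1 ≤ k)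
    (hw : 0 < w) (hW : 0 < W) (hsep : ∀ x ∈ V, ∀ y ∈ V, x ≠ y → w ≤ ‖x - y‖)
    (hdiam : ∀ x ∈ V, ∀ y ∈ V, ‖x - y‖ ≤ W) (hn : 0 < n) {l : List (Pt d)}
    (hl : ∀ x ∈ l, x ∈ V) (hln : l.length ≤ n) :
    expectedCenters (onRun k l) ≤
      ENNReal.ofReal (OnState.initPotential k (3 * k * (1 + Real.logb 2 n)) (n * W ^ 2)
        (w ^ 2 / 2 / k)) + 1 := by
  let s₀ : OnState d := { C := [], q := 0, f := 0, cost := 0, m := 0 }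
  calc expectedCenters (onRun k l)
      ≤ (onRun k l).expect (OnState.runPotential k n w W) :=
        PMF.expect_mono fun t _ => (ENNReal.ofReal_natCast _).symm.trans_le
          (ENNReal.ofReal_le_ofReal OnState.length_le_potential)
    _ ≤ s₀.runPotential k n w W + l.length * ENNReal.ofReal (1 / n) :=
        PMF.expect_foldlM_le _ _ _ (fun r s => s.WellFormed k V ∧ s.m + r ≤ n) V
          (fun r s x hx hs s' hs' => ⟨hs.1.onStep hk hw hsep hx s' hs',
            by have := OnState.m_le_of_mem_support_onStep hs'; omega⟩)
          (fun r s x hx hs => OnState.expect_runPotential_onStep_le hk hw hW hsep hdiam hn hx hs.1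
            (by omega))
          l s₀ hl ⟨⟨by simp [s₀], by simp [s₀]⟩, by simpa [s₀] using hln⟩
    _ ≤ _ := by
        apply add_le_add
        · exact (congrArg ENNReal.ofReal (if_pos (by simp [s₀]))).le
        · calc (l.length : ℝ≥0∞) * ENNReal.ofReal (1 / n)
              ≤ n * ENNReal.ofReal (1 / n) := by gcongr
            _ = 1 := by
              rw [← ENNReal.ofReal_natCast, ← ENNReal.ofReal_mul (by positivity)]
              simp [hn.ne']

lemma initPotential_add_one_le {k n : ℕ} {w W : ℝ} (hk : 1 ≤ k) (hn : 2 ≤ n) (hkn : k ≤ n)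
    (hw : 0 < w) (hwW : w ≤ W) :
    OnState.initPotential k (3 * k * (1 + Real.logb 2 n)) (n * W ^ 2) (w ^ 2 / 2 / k) + 1 ≤
      12 * k * (1 + Real.logb 2 n) * (1 + Real.logb 2 (W / w * n)) := by
  have hk' : (1 : ℝ) ≤ k := by exact_mod_cast hk
  have hn' : (0 : ℝ) < n := by positivity
  have hγ : 0 < W / w := div_pos (hw.trans_le hwW) hw
  have hN : 1 ≤ Real.logb 2 n := by
    rw [← Real.logb_self_eq_one one_lt_two]
    exact Real.logb_le_logb_of_le one_lt_two two_pos (by exact_mod_cast hn)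
  have hK : 0 ≤ Real.logb 2 k := Real.logb_two_natCast_nonneg k
  have hKN : Real.logb 2 k ≤ Real.logb 2 n := Real.logb_two_natCast_mono hkn
  have hG : 0 ≤ Real.logb 2 (W / w) := Real.logb_nonneg one_lt_two ((one_le_div hw).2 hwW)
  have hlog : Real.logb 2 (n * W ^ 2 / (w ^ 2 / 2 / k)) =
      1 + Real.logb 2 k + Real.logb 2 n + 2 * Real.logb 2 (W / w) := by
    rw [show (n : ℝ) * W ^ 2 / (w ^ 2 / 2 / k) = 2 * (k * (n * (W / w) ^ 2)) by field_simp,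
      Real.logb_mul two_ne_zero (by positivity), Real.logb_mul (by positivity) (by positivity),
      Real.logb_mul hn'.ne' (by positivity), Real.logb_self_eq_one one_lt_two, Real.logb_pow]
    push_cast
    ring
  rw [OnState.initPotential, hlog, Real.logb_mul hγ.ne' hn'.ne']
  set N := Real.logb 2 n
  set G := Real.logb 2 (W / w)
  have hfirst : 3 * (k : ℝ) * (1 + N) + 1 ≤ 4 * (k * (1 + N)) := by nlinarith
  have hsecond : 1 + (1 + Real.logb 2 k + N + 2 * G) ≤ 2 * (1 + (G + N)) := by linarith
  have hprod := mul_le_mul hfirst hsecond (by linarith) (by positivity)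
  have hone : (1 : ℝ) ≤ (1 + N) * (1 + (G + N)) := by nlinarith
  rw [max_eq_right (by positivity)]
  nlinarith [mul_le_mul_of_nonneg_left hone (by positivity : (0 : ℝ) ≤ k)]

lemma exists_aspectRatio_eq {d n : ℕ} (v : Fin n → Pt d) {i j : Fin n} (hij : v i ≠ v j) :
    ∃ w W : ℝ, 0 < w ∧ w ≤ W ∧ aspectRatio v = W / w ∧
      (∀ x ∈ Set.range v, ∀ y ∈ Set.range v, x ≠ y → w ≤ ‖x - y‖) ∧
      ∀ x ∈ Set.range v, ∀ y ∈ Set.range v, ‖x - y‖ ≤ W := by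
  set S : Set ℝ := {x | ∃ i j, v i ≠ v j ∧ x = ‖v i - v j‖}
  have hS : S.Finite := (Set.finite_range fun p : Fin n × Fin n => ‖v p.1 - v p.2‖).subset <| by
    rintro x ⟨i, j, -, rfl⟩
    exact ⟨(i, j), rfl⟩
  have hne : S.Nonempty := ⟨_, i, j, hij, rfl⟩
  have hw : 0 < sInf S := by
    obtain ⟨i, j, hij, h⟩ := hne.csInf_mem hS
    rw [h]
    exact norm_sub_pos_iff.2 hij
  have hwW : sInf S ≤ sSup S := csInf_le_csSup hne hS.bddBelow hS.bddAbove
  refine ⟨sInf S, sSup S, hw, hwW, rfl, ?_, ?_⟩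
  · rintro _ ⟨i, rfl⟩ _ ⟨j, rfl⟩ hij
    exact csInf_le hS.bddBelow ⟨i, j, hij, rfl⟩
  · rintro _ ⟨i, rfl⟩ _ ⟨j, rfl⟩
    by_cases hij : v i = v j
    · simpa [hij] using hw.le.trans hwW
    · exact le_csSup hS.bddAbove ⟨i, j, hij, rfl⟩

/-- There is a universal constant `c₀` such that for every dimension `d`,
every `k ≥ 1` and every stream `v 0, …, v (n-1)` in `ℝ^d` with `n ≥ 2` containing at
least `k+1` distinct vectors, the expected number of centers produced by the fully
online `k`-means algorithm is at most `c₀ · k · (1 + log₂ n) · (1 + log₂(γ·n))`,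
where `γ` is the aspect ratio of the input. -/
theorem fullyOnline_expected_number_of_centers :
    ∃ c₀ : ℝ, 0 < c₀ ∧
      ∀ (d n k : ℕ) (v : Fin n → Pt d),
        2 ≤ n → 1 ≤ k →
        (∃ I : Fin (k + 1) → Fin n, Function.Injective (fun a => v (I a))) →
        expectedCenters (onRun k (List.ofFn v)) ≤
          ENNReal.ofReal (c₀ * k * (1 + Real.logb 2 n) *
            (1 + Real.logb 2 (aspectRatio v * n))) := by
  refine ⟨12, by norm_num, fun d n k v hn hk ⟨I, hI⟩ => ?_⟩
  have hkn : k + 1 ≤ n := by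
    simpa using Fintype.card_le_of_injective I (hI.of_comp (f := v))
  have hdist : v (I 0) ≠ v (I (Fin.last k)) := fun h => by
    have := congrArg Fin.val (hI h)
    simp only [Fin.val_zero, Fin.val_last] at this
    omega
  obtain ⟨w, W, hw, hwW, hγ, hsep, hdiam⟩ := exists_aspectRatio_eq v hdist
  calc expectedCenters (onRun k (List.ofFn v))
      ≤ _ + 1 := expectedCenters_onRun_le (n := n) hk hw (hw.trans_le hwW) hsep hdiam (by omega)
        (fun x hx => (List.mem_ofFn' v x).1 hx) (by simp)
    _ ≤ _ := by
      rw [← ENNReal.ofReal_one, ← ENNReal.ofReal_add OnState.initPotential_nonneg zero_le_one, hγ]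
      exact ENNReal.ofReal_le_ofReal (initPotential_add_one_le hk hn (by omega) hw hwW)
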